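/- Let h_n : ℝⁿ → ℝ (n ≥ 1) satisfy: (1) h_{n+1}(ε₁,...,ε_j,0,ε_{j+1},...,εₙ) = h_n(ε₁,...,εₙ); (2) ∂h_n/∂ε_j = 0 whenever ε_j = 0; (3) permutation symmetry; and (4) |D^α h_n| ≤ B uniformly for all multi-indices α = (α₁,...,α_r) with r ≤ 3, each α_j ≥ 2, and Σ_j (α_j − 2) ≤ 1. Then there exists a function h_∞ : [0,∞) → ℝ such that for all n and all ε ∈ ℝⁿ: |h_n(ε₁,...,εₙ) − h_∞(‖ε‖₂)| ≤ c · B · max(1, ‖ε‖₂³) · Σ_{j=1}^n |ε_j|³, where c is an absolute constant. -/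

import Mathlib

open Finset

/-- Partial derivative of `f : ℝᵏ → ℝ` in the `j`-th coordinate. -/
noncomputable def pd {k : ℕ} (j : Fin k) (f : (Fin k → ℝ) → ℝ) : (Fin k → ℝ) → ℝ :=
  fun x => deriv (fun s => f (Function.update x j s)) (x j)

/-- The mixed partial derivative `D^α` of order `α q` in the coordinate `ι q`,
for `q = 0, …, r-1`. -/
noncomputable def pdMulti {k r : ℕ} (ι : Fin r → Fin k) (α : Fin r → ℕ)
    (f : (Fin k → ℝ) → ℝ) : (Fin k → ℝ) → ℝ :=
  (List.ofFn fun q : Fin r => (pd (ι q))^[α q]).foldr (fun op g => op g) f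

open Filter Topology

/-!
Read `h` as a function `H` of the finite multiset of its arguments; by (1) and (3) zeros may be
dropped and the order is irrelevant. A Taylor expansion in one coordinate, using (2), gives
`H (u ::ₘ s) = H s + u² / 2 · G s + O(B |u|³)` with `G s = ∂₁² h (0, s)`. Expanding
`H (u ::ₘ v ::ₘ s)` in both orders shows `|G (v ::ₘ s) - G s| ≤ 18 B |v|`, and hence replacing a
point `a` by two points `u, v` with `u² + v² = a²` changes `H` by at most `12 B |a|³`.

Replacing every point by two copies of itself scaled by `1/√2` preserves `∑ ε²` and multiplies
`∑ |ε|³` by `1/√2`, so iterating this produces a geometrically Cauchy sequence, whose limit `L`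
is within `48 B ∑ |ε|³` of `H`. After `k` iterations, merging the `2ᵏ` copies of `u` and of `v`
into copies of `a` costs only `12 B |a|³ 2^(-k/2)`, so `L` is unchanged by merging two points
into one of the same Euclidean length; hence `L s` depends only on `‖s‖₂`, and `h_∞ t = L {t}`.
-/

theorem abs_sub_le_mul_abs_pow_of_hasDerivAt {f f' : ℝ → ℝ} {C : ℝ} {k : ℕ}
    (hf : ∀ t, HasDerivAt f (f' t) t) (hf' : ∀ t, |f' t| ≤ C * |t| ^ k) (u : ℝ) :
    |f u - f 0| ≤ C * |u| ^ (k + 1) := by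
  have hC : 0 ≤ C := by simpa using (abs_nonneg _).trans (hf' 1)
  have hbound : ∀ t ∈ Set.uIcc 0 u, ‖f' t‖ ≤ C * |u| ^ k := fun t ht =>
    (hf' t).trans <| mul_le_mul_of_nonneg_left
      (pow_le_pow_left₀ (abs_nonneg t) (by simpa using Set.abs_sub_left_of_mem_uIcc ht) k) hC
  have := (convex_uIcc (0 : ℝ) u).norm_image_sub_le_of_norm_hasDerivWithin_le
    (fun t _ => (hf t).hasDerivWithinAt) hbound Set.left_mem_uIcc Set.right_mem_uIcc
  simpa [pow_succ, mul_assoc] using this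

theorem abs_taylor_remainder_two_le {f f₁ f₂ f₃ : ℝ → ℝ} {B : ℝ}
    (h₁ : ∀ t, HasDerivAt f (f₁ t) t) (h₂ : ∀ t, HasDerivAt f₁ (f₂ t) t)
    (h₃ : ∀ t, HasDerivAt f₂ (f₃ t) t) (hf₁ : f₁ 0 = 0) (hB : ∀ t, |f₃ t| ≤ B) (u : ℝ) :
    |f u - f 0 - u ^ 2 / 2 * f₂ 0| ≤ B * |u| ^ 3 := by
  have e₂ : ∀ t, |f₂ t - f₂ 0| ≤ B * |t| ^ 1 :=
    abs_sub_le_mul_abs_pow_of_hasDerivAt h₃ (by simpa using hB)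
  have d₁ : ∀ t, HasDerivAt (fun t => f₁ t - t * f₂ 0) (f₂ t - f₂ 0) t := fun t => by
    simpa using (h₂ t).fun_sub ((hasDerivAt_id t).mul_const (f₂ 0))
  have e₁ : ∀ t, |f₁ t - t * f₂ 0| ≤ B * |t| ^ 2 := fun t => by
    simpa [hf₁] using abs_sub_le_mul_abs_pow_of_hasDerivAt d₁ e₂ t
  have d₀ : ∀ t, HasDerivAt (fun t => f t - t ^ 2 / 2 * f₂ 0) (f₁ t - t * f₂ 0) t := fun t => by
    simpa using (h₁ t).fun_sub (((hasDerivAt_pow 2 t).div_const 2).mul_const (f₂ 0))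
  simpa [sub_right_comm] using abs_sub_le_mul_abs_pow_of_hasDerivAt d₀ e₁ u

theorem eq_of_forall_abs_sq_mul_sub_le {a b C : ℝ} (h : ∀ u : ℝ, |u ^ 2 * (a - b)| ≤ C * |u| ^ 3) :
    a = b := by
  have hlin : ∀ u > 0, |a - b| ≤ C * u := fun u hu => by
    have hu2 : 0 < u ^ 2 := by positivity
    have := h u
    rw [abs_mul, abs_of_pos hu, abs_of_pos hu2] at this
    nlinarith
  have hC : Tendsto (fun u => C * u) (𝓝[>] 0) (𝓝 0) := by
    simpa using ((continuous_const_mul C).tendsto 0).mono_left nhdsWithin_le_nhds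
  exact sub_eq_zero.1 <| abs_nonpos_iff.1 <| ge_of_tendsto hC <|
    eventually_nhdsWithin_of_forall hlin

theorem abs_le_of_abs_four_mul_sub_le {d : ℝ → ℝ} {M K : ℝ} (hM : ∀ w, |d w| ≤ M)
    (hK : ∀ w, |4 * d w - d (2 * w)| ≤ K * |w|) (w : ℝ) : |d w| ≤ K / 2 * |w| := by
  have hK₀ : 0 ≤ K := by simpa using (abs_nonneg _).trans (hK 1)
  have hiter : ∀ k : ℕ, ∀ w, |d w| ≤ M / 4 ^ k + K / 2 * |w| := by
    intro k
    induction k with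
    | zero => intro w; simpa using (hM w).trans (le_add_of_nonneg_right (by positivity))
    | succ k ih =>
      intro w
      have h₁ := ih (2 * w)
      have h₂ := abs_sub_abs_le_abs_sub (4 * d w) (d (2 * w))
      rw [abs_mul, abs_two] at h₁
      rw [abs_mul, abs_of_pos four_pos] at h₂
      rw [pow_succ, ← div_div]
      linarith [hK w]
  have hlim : Tendsto (fun k : ℕ => M / 4 ^ k + K / 2 * |w|) atTop (𝓝 (K / 2 * |w|)) := by
    simpa using (tendsto_const_nhds.div_atTop
      (tendsto_pow_atTop_atTop_of_one_lt (by norm_num : (1 : ℝ) < 4))).add_const (K / 2 * |w|)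
  exact ge_of_tendsto' hlim fun k => hiter k w

theorem sum_map_nonneg {f : ℝ → ℝ} (hf : ∀ x, 0 ≤ f x) (s : Multiset ℝ) : 0 ≤ (s.map f).sum :=
  Multiset.sum_nonneg fun y hy => by
    obtain ⟨x, -, rfl⟩ := Multiset.mem_map.1 hy
    exact hf x

theorem inv_sqrt_two_le : (√2)⁻¹ ≤ 3 / 4 := by
  rw [inv_le_comm₀ (by positivity) (by norm_num), Real.le_sqrt (by norm_num) (by norm_num)]
  norm_num

theorem pd_eq_fderiv_apply {k : ℕ} {g : (Fin k → ℝ) → ℝ} (hg : Differentiable ℝ g) (j : Fin k)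
    (x : Fin k → ℝ) : pd j g x = fderiv ℝ g x (Pi.single j 1) :=
  ((hg x).hasFDerivAt.comp_hasDerivAt_of_eq (x j) (hasDerivAt_update x j (x j))
    (Function.update_eq_self j x).symm).deriv

theorem ContDiff.pd {k m : ℕ} {g : (Fin k → ℝ) → ℝ} (hg : ContDiff ℝ (m + 1) g) (j : Fin k) :
    ContDiff ℝ m (pd j g) := by
  rw [funext (pd_eq_fderiv_apply (hg.differentiable (by simp)) j)]
  exact (hg.fderiv_right (by norm_cast)).clm_apply contDiff_const

theorem hasDerivAt_cons_pd_zero {k : ℕ} {g : (Fin (k + 1) → ℝ) → ℝ} (hg : Differentiable ℝ g)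
    (y : Fin k → ℝ) (t : ℝ) :
    HasDerivAt (fun s => g (Fin.cons s y)) (pd 0 g (Fin.cons t y)) t := by
  have hupd : (fun s => g (Fin.cons s y)) = fun s => g (Function.update (Fin.cons t y) 0 s) := by
    simp only [Fin.update_cons_zero]
  rw [hupd]
  exact ((hg _).comp t (hasDerivAt_update _ 0 t).differentiableAt).hasDerivAt

-- The order of `s.toList` is arbitrary, so this is meaningful only for symmetric `h`.
noncomputable def evalMultiset (h : (n : ℕ) → (Fin n → ℝ) → ℝ) (s : Multiset ℝ) : ℝ :=
  h s.toList.length s.toList.get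

section Symmetric

variable {h : (n : ℕ) → (Fin n → ℝ) → ℝ}

theorem apply_eq_of_perm (hsym : ∀ n (σ : Equiv.Perm (Fin n)) (ε : Fin n → ℝ), h n (ε ∘ σ) = h n ε)
    {m n : ℕ} {ε : Fin m → ℝ} {ε' : Fin n → ℝ}
    (hp : (List.ofFn ε).Perm (List.ofFn ε')) : h m ε = h n ε' := by
  obtain rfl : m = n := by simpa using hp.length_eq
  have hsort : ε ∘ Tuple.sort ε = ε' ∘ Tuple.sort ε' := by
    refine List.ofFn_injective (List.Perm.eq_of_sortedLE ?_ ?_ ?_)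
    · exact List.sortedLE_ofFn_iff.2 (Tuple.monotone_sort ε)
    · exact List.sortedLE_ofFn_iff.2 (Tuple.monotone_sort ε')
    · exact ((Tuple.sort ε).ofFn_comp_perm ε).trans
        (hp.trans ((Tuple.sort ε').ofFn_comp_perm ε').symm)
  rw [← hsym m (Tuple.sort ε), hsort, hsym]

theorem evalMultiset_ofFn (hsym : ∀ n (σ : Equiv.Perm (Fin n)) (ε : Fin n → ℝ), h n (ε ∘ σ) = h n ε)
    {n : ℕ} (ε : Fin n → ℝ) : evalMultiset h (List.ofFn ε) = h n ε :=
  apply_eq_of_perm hsym <| by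
    rw [List.ofFn_get]
    exact Multiset.coe_eq_coe.mp (Multiset.coe_toList _)

theorem evalMultiset_cons (hsym : ∀ n (σ : Equiv.Perm (Fin n)) (ε : Fin n → ℝ), h n (ε ∘ σ) = h n ε)
    (u : ℝ) (s : Multiset ℝ) :
    evalMultiset h (u ::ₘ s) = h (s.toList.length + 1) (Fin.cons u s.toList.get) := by
  rw [← evalMultiset_ofFn hsym, List.ofFn_succ]
  simp only [Fin.cons_zero, Fin.cons_succ, List.ofFn_get, ← Multiset.cons_coe, Multiset.coe_toList]

end Symmetric

noncomputable def spread (k : ℕ) (s : Multiset ℝ) : Multiset ℝ :=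
  2 ^ k • s.map (· * (√2)⁻¹ ^ k)

theorem spread_zero (s : Multiset ℝ) : spread 0 s = s := by
  simp [spread]

theorem spread_succ (k : ℕ) (s : Multiset ℝ) :
    spread (k + 1) s = (spread k s).map (· * (√2)⁻¹) + (spread k s).map (· * (√2)⁻¹) := by
  simp only [spread, Multiset.map_nsmul, Multiset.map_map, Function.comp_def, ← add_nsmul,
    ← two_mul, pow_succ, mul_assoc]
  rw [mul_comm]

theorem spread_add (k : ℕ) (s t : Multiset ℝ) : spread k (s + t) = spread k s + spread k t := by
  simp [spread]

theorem spread_singleton (k : ℕ) (a : ℝ) :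
    spread k {a} = Multiset.replicate (2 ^ k) (a * (√2)⁻¹ ^ k) := by
  simp [spread, Multiset.nsmul_singleton]

theorem sum_map_abs_pow_three_spread (k : ℕ) (s : Multiset ℝ) :
    ((spread k s).map fun x => |x| ^ 3).sum = (s.map fun x => |x| ^ 3).sum * (√2)⁻¹ ^ k := by
  have hr : (2 : ℝ) ^ k * ((√2)⁻¹ ^ k) ^ 3 = (√2)⁻¹ ^ k := by
    have h2 : 2 * ((√2)⁻¹ * (√2)⁻¹) = 1 := by
      rw [← mul_inv, Real.mul_self_sqrt zero_le_two, mul_inv_cancel₀ two_ne_zero]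
    rw [← pow_mul, pow_mul', ← mul_pow, pow_succ, pow_two, ← mul_assoc, h2, one_mul]
  simp only [spread, Multiset.map_nsmul, Multiset.map_map, Function.comp_def, Multiset.sum_nsmul,
    abs_mul, mul_pow, Multiset.sum_map_mul_right, nsmul_eq_mul]
  rw [abs_of_nonneg (by positivity)]
  push_cast
  linear_combination (s.map fun x => |x| ^ 3).sum * hr

-- Hypotheses (1)–(4), specialised to the first coordinate, which suffices by symmetry.
structure Admissible (h : (n : ℕ) → (Fin n → ℝ) → ℝ) (B : ℝ) : Prop where
  contDiff : ∀ n, ContDiff ℝ 3 (h n)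
  comp_perm : ∀ n (σ : Equiv.Perm (Fin n)) (ε : Fin n → ℝ), h n (ε ∘ σ) = h n ε
  cons_zero : ∀ n (ε : Fin n → ℝ), h (n + 1) (Fin.cons 0 ε) = h n ε
  pd_cons_zero : ∀ n (ε : Fin n → ℝ), pd 0 (h (n + 1)) (Fin.cons 0 ε) = 0
  abs_pd_pd_le : ∀ n x, |pd 0 (pd 0 (h (n + 1))) x| ≤ B
  abs_pd_pd_pd_le : ∀ n x, |pd 0 (pd 0 (pd 0 (h (n + 1)))) x| ≤ B

noncomputable def secondCoeff (h : (n : ℕ) → (Fin n → ℝ) → ℝ) (s : Multiset ℝ) : ℝ :=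
  pd 0 (pd 0 (h (s.toList.length + 1))) (Fin.cons 0 s.toList.get)

noncomputable def spreadLimit (h : (n : ℕ) → (Fin n → ℝ) → ℝ) (s : Multiset ℝ) : ℝ :=
  limUnder atTop fun k => evalMultiset h (spread k s)

namespace Admissible

variable {h : (n : ℕ) → (Fin n → ℝ) → ℝ} {B : ℝ}

theorem evalMultiset_cons_zero (hA : Admissible h B) (s : Multiset ℝ) :
    evalMultiset h (0 ::ₘ s) = evalMultiset h s := by
  rw [evalMultiset_cons hA.comp_perm, hA.cons_zero]
  rfl

theorem evalMultiset_replicate_zero_add (hA : Admissible h B) (p : ℕ) (s : Multiset ℝ) :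
    evalMultiset h (Multiset.replicate p 0 + s) = evalMultiset h s := by
  induction p with
  | zero => simp
  | succ p ih => rw [Multiset.replicate_succ, Multiset.cons_add, hA.evalMultiset_cons_zero, ih]

theorem abs_secondCoeff_le (hA : Admissible h B) (s : Multiset ℝ) : |secondCoeff h s| ≤ B :=
  hA.abs_pd_pd_le _ _

theorem abs_evalMultiset_cons_sub_le (hA : Admissible h B) (s : Multiset ℝ) (u : ℝ) :
    |evalMultiset h (u ::ₘ s) - evalMultiset h s - u ^ 2 / 2 * secondCoeff h s| ≤ B * |u| ^ 3 := by
  have c₃ : ContDiff ℝ 3 (h (s.toList.length + 1)) := hA.contDiff _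
  have c₂ : ContDiff ℝ 2 (pd 0 (h (s.toList.length + 1))) := c₃.pd 0
  have c₁ : ContDiff ℝ 1 (pd 0 (pd 0 (h (s.toList.length + 1)))) := c₂.pd 0
  have := abs_taylor_remainder_two_le
    (hasDerivAt_cons_pd_zero (c₃.differentiable (by simp)) s.toList.get)
    (hasDerivAt_cons_pd_zero (c₂.differentiable (by simp)) s.toList.get)
    (hasDerivAt_cons_pd_zero (c₁.differentiable (by simp)) s.toList.get)
    (hA.pd_cons_zero _ _) (fun _ => hA.abs_pd_pd_pd_le _ _) u
  rwa [hA.cons_zero, ← evalMultiset_cons hA.comp_perm] at this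

theorem secondCoeff_cons_zero (hA : Admissible h B) (s : Multiset ℝ) :
    secondCoeff h (0 ::ₘ s) = secondCoeff h s := by
  refine eq_of_forall_abs_sq_mul_sub_le (C := 4 * B) fun u => ?_
  have e₀ := hA.abs_evalMultiset_cons_sub_le (0 ::ₘ s) u
  have e₁ := hA.abs_evalMultiset_cons_sub_le s u
  rw [Multiset.cons_swap, hA.evalMultiset_cons_zero, hA.evalMultiset_cons_zero] at e₀
  obtain ⟨l₀, u₀⟩ := abs_le.1 e₀
  obtain ⟨l₁, u₁⟩ := abs_le.1 e₁
  exact abs_le.2 ⟨by linarith, by linarith⟩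

-- Expand `evalMultiset h (u ::ₘ v ::ₘ s)` first in `u` and then in `v`, and the other way round.
theorem abs_secondCoeff_swap_le (hA : Admissible h B) (s : Multiset ℝ) (u v : ℝ) :
    |u ^ 2 * (secondCoeff h (v ::ₘ s) - secondCoeff h s)
        - v ^ 2 * (secondCoeff h (u ::ₘ s) - secondCoeff h s)|
      ≤ 4 * B * (|u| ^ 3 + |v| ^ 3) := by
  obtain ⟨l₁, u₁⟩ := abs_le.1 (hA.abs_evalMultiset_cons_sub_le (v ::ₘ s) u)
  obtain ⟨l₂, u₂⟩ := abs_le.1 (hA.abs_evalMultiset_cons_sub_le s v)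
  obtain ⟨l₃, u₃⟩ := abs_le.1 (hA.abs_evalMultiset_cons_sub_le (u ::ₘ s) v)
  obtain ⟨l₄, u₄⟩ := abs_le.1 (hA.abs_evalMultiset_cons_sub_le s u)
  rw [Multiset.cons_swap] at l₃ u₃
  exact abs_le.2 ⟨by linarith, by linarith⟩

theorem abs_secondCoeff_cons_sub_le (hA : Admissible h B) (s : Multiset ℝ) (v : ℝ) :
    |secondCoeff h (v ::ₘ s) - secondCoeff h s| ≤ 18 * B * |v| := by
  have hM : ∀ w, |secondCoeff h (w ::ₘ s) - secondCoeff h s| ≤ 2 * B := fun w => by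
    linarith [abs_sub (secondCoeff h (w ::ₘ s)) (secondCoeff h s),
      hA.abs_secondCoeff_le (w ::ₘ s), hA.abs_secondCoeff_le s]
  have hK : ∀ w, |4 * (secondCoeff h (w ::ₘ s) - secondCoeff h s)
      - (secondCoeff h ((2 * w) ::ₘ s) - secondCoeff h s)| ≤ 36 * B * |w| := fun w => by
    rcases eq_or_ne w 0 with rfl | hw
    · simp [hA.secondCoeff_cons_zero]
    have hw2 : 0 < w ^ 2 := by positivity
    have hcube : |w| ^ 3 = w ^ 2 * |w| := by rw [pow_succ, sq_abs]
    have := hA.abs_secondCoeff_swap_le s (2 * w) w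
    set X := secondCoeff h (w ::ₘ s) - secondCoeff h s
    set Y := secondCoeff h ((2 * w) ::ₘ s) - secondCoeff h s
    rw [show (2 * w) ^ 2 * X - w ^ 2 * Y = w ^ 2 * (4 * X - Y) by ring, abs_mul, abs_of_pos hw2,
      abs_mul, abs_two, mul_pow, hcube] at this
    exact le_of_mul_le_mul_left (by linarith) hw2
  linarith [abs_le_of_abs_four_mul_sub_le hM hK v]

theorem abs_evalMultiset_cons_sub_cons_cons_le (hA : Admissible h B) (s : Multiset ℝ)
    {a u v : ℝ} (huv : u ^ 2 + v ^ 2 = a ^ 2) :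
    |evalMultiset h (a ::ₘ s) - evalMultiset h (u ::ₘ v ::ₘ s)| ≤ 12 * B * |a| ^ 3 := by
  have hB : 0 ≤ B := (abs_nonneg _).trans (hA.abs_secondCoeff_le 0)
  have hua : |u| ≤ |a| := sq_le_sq.1 (by linarith [sq_nonneg v])
  have hva : |v| ≤ |a| := sq_le_sq.1 (by linarith [sq_nonneg u])
  have hG : |u ^ 2 / 2 * (secondCoeff h (v ::ₘ s) - secondCoeff h s)| ≤ 9 * B * |a| ^ 3 := by
    rw [abs_mul, abs_of_nonneg (by positivity), ← sq_abs u]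
    calc |u| ^ 2 / 2 * |secondCoeff h (v ::ₘ s) - secondCoeff h s|
        ≤ |a| ^ 2 / 2 * (18 * B * |a|) := by
          gcongr
          exact (hA.abs_secondCoeff_cons_sub_le s v).trans (by gcongr)
      _ = 9 * B * |a| ^ 3 := by ring
  have hsplit : a ^ 2 / 2 * secondCoeff h s
      = u ^ 2 / 2 * secondCoeff h s + v ^ 2 / 2 * secondCoeff h s := by
    rw [← huv]; ring
  obtain ⟨l₀, u₀⟩ := abs_le.1 hG
  obtain ⟨l₁, u₁⟩ := abs_le.1 (hA.abs_evalMultiset_cons_sub_le s a)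
  obtain ⟨l₂, u₂⟩ := abs_le.1 (hA.abs_evalMultiset_cons_sub_le (v ::ₘ s) u)
  obtain ⟨l₃, u₃⟩ := abs_le.1 (hA.abs_evalMultiset_cons_sub_le s v)
  have hu3 : B * |u| ^ 3 ≤ B * |a| ^ 3 := by gcongr
  have hv3 : B * |v| ^ 3 ≤ B * |a| ^ 3 := by gcongr
  exact abs_le.2 ⟨by linarith, by linarith⟩

theorem abs_evalMultiset_add_sub_map_add_map_le (hA : Admissible h B) {f g : ℝ → ℝ}
    (t : Multiset ℝ) (hfg : ∀ x ∈ t, f x ^ 2 + g x ^ 2 = x ^ 2) (s : Multiset ℝ) :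
    |evalMultiset h (t + s) - evalMultiset h (t.map f + t.map g + s)|
      ≤ 12 * B * (t.map fun x => |x| ^ 3).sum := by
  induction t using Multiset.induction_on generalizing s with
  | empty => simp
  | cons x t ih =>
    have hx := hA.abs_evalMultiset_cons_sub_cons_cons_le (t + s)
      (hfg x (Multiset.mem_cons_self x t))
    have ht := ih (fun y hy => hfg y (Multiset.mem_cons_of_mem hy)) (f x ::ₘ g x ::ₘ s)
    have e₁ : x ::ₘ t + s = x ::ₘ (t + s) := Multiset.cons_add x t s
    have e₂ : f x ::ₘ g x ::ₘ (t + s) = t + (f x ::ₘ g x ::ₘ s) := by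
      simp only [← Multiset.singleton_add]; abel
    have e₃ : t.map f + t.map g + (f x ::ₘ g x ::ₘ s) = (x ::ₘ t).map f + (x ::ₘ t).map g + s := by
      rw [Multiset.map_cons, Multiset.map_cons]
      simp only [← Multiset.singleton_add]
      abel
    rw [e₂] at hx
    rw [e₃] at ht
    rw [e₁, Multiset.map_cons (fun x => |x| ^ 3), Multiset.sum_cons]
    linarith [abs_sub_le (evalMultiset h (x ::ₘ (t + s))) (evalMultiset h (t + (f x ::ₘ g x ::ₘ s)))
      (evalMultiset h ((x ::ₘ t).map f + (x ::ₘ t).map g + s))]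

theorem abs_evalMultiset_spread_sub_succ_le (hA : Admissible h B) (s : Multiset ℝ) (k : ℕ) :
    |evalMultiset h (spread k s) - evalMultiset h (spread (k + 1) s)|
      ≤ 12 * B * (s.map fun x => |x| ^ 3).sum * (√2)⁻¹ ^ k := by
  have hhalf : ∀ x : ℝ, (x * (√2)⁻¹) ^ 2 + (x * (√2)⁻¹) ^ 2 = x ^ 2 := fun x => by
    rw [mul_pow, inv_pow, Real.sq_sqrt zero_le_two]; ring
  simpa [spread_succ, sum_map_abs_pow_three_spread, mul_assoc] using
    hA.abs_evalMultiset_add_sub_map_add_map_le (spread k s) (fun x _ => hhalf x) 0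

theorem tendsto_spreadLimit (hA : Admissible h B) (s : Multiset ℝ) :
    Tendsto (fun k => evalMultiset h (spread k s)) atTop (𝓝 (spreadLimit h s)) :=
  (cauchySeq_of_le_geometric _ _ (by linarith [inv_sqrt_two_le])
    (hA.abs_evalMultiset_spread_sub_succ_le s)).tendsto_limUnder

theorem abs_evalMultiset_sub_spreadLimit_le (hA : Admissible h B) (s : Multiset ℝ) :
    |evalMultiset h s - spreadLimit h s| ≤ 48 * B * (s.map fun x => |x| ^ 3).sum := by
  have hB : 0 ≤ B := (abs_nonneg _).trans (hA.abs_secondCoeff_le 0)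
  have hs := sum_map_nonneg (fun x => pow_nonneg (abs_nonneg x) 3) s
  have := dist_le_of_le_geometric_of_tendsto₀ _ _ (by linarith [inv_sqrt_two_le])
    (hA.abs_evalMultiset_spread_sub_succ_le s) (hA.tendsto_spreadLimit s)
  rw [spread_zero, Real.dist_eq] at this
  refine this.trans ?_
  rw [div_le_iff₀ (by linarith [inv_sqrt_two_le])]
  nlinarith [inv_sqrt_two_le, mul_nonneg hB hs]

theorem spreadLimit_cons_zero (hA : Admissible h B) (s : Multiset ℝ) :
    spreadLimit h (0 ::ₘ s) = spreadLimit h s := by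
  simp only [spreadLimit, ← Multiset.singleton_add, spread_add, spread_singleton, zero_mul,
    hA.evalMultiset_replicate_zero_add]

theorem abs_evalMultiset_spread_cons_sub_le (hA : Admissible h B) (s : Multiset ℝ) {a u v : ℝ}
    (huv : u ^ 2 + v ^ 2 = a ^ 2) (k : ℕ) :
    |evalMultiset h (spread k (a ::ₘ s)) - evalMultiset h (spread k (u ::ₘ v ::ₘ s))|
      ≤ 12 * B * |a| ^ 3 * (√2)⁻¹ ^ k := by
  have hmap : ∀ c : ℝ, (spread k {a}).map (fun _ => c * (√2)⁻¹ ^ k) = spread k {c} := fun c => by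
    rw [Multiset.map_const', spread_singleton, spread_singleton, Multiset.card_replicate]
  have huvk : (u * (√2)⁻¹ ^ k) ^ 2 + (v * (√2)⁻¹ ^ k) ^ 2 = (a * (√2)⁻¹ ^ k) ^ 2 := by
    rw [mul_pow, mul_pow, mul_pow, ← huv]; ring
  have := hA.abs_evalMultiset_add_sub_map_add_map_le (spread k {a})
    (f := fun _ => u * (√2)⁻¹ ^ k) (g := fun _ => v * (√2)⁻¹ ^ k)
    (fun x hx => by rw [spread_singleton] at hx; rwa [Multiset.eq_of_mem_replicate hx]) (spread k s)
  simp only [hmap, sum_map_abs_pow_three_spread, ← spread_add, Multiset.singleton_add] at this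
  simpa [Multiset.cons_add, mul_assoc] using this

theorem spreadLimit_cons_cons (hA : Admissible h B) (s : Multiset ℝ) {a u v : ℝ}
    (huv : u ^ 2 + v ^ 2 = a ^ 2) : spreadLimit h (u ::ₘ v ::ₘ s) = spreadLimit h (a ::ₘ s) := by
  have hr : Tendsto (fun k : ℕ => (√2)⁻¹ ^ k) atTop (𝓝 0) :=
    tendsto_pow_atTop_nhds_zero_of_lt_one (inv_nonneg.2 (Real.sqrt_nonneg 2))
      (by linarith [inv_sqrt_two_le])
  have hdiff := squeeze_zero_norm
    (fun k => (Real.norm_eq_abs _).trans_le (hA.abs_evalMultiset_spread_cons_sub_le s huv k))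
    (by simpa using hr.const_mul (12 * B * |a| ^ 3))
  have := tendsto_nhds_unique ((hA.tendsto_spreadLimit _).sub (hA.tendsto_spreadLimit _)) hdiff
  linarith

theorem spreadLimit_add (hA : Admissible h B) (s t : Multiset ℝ) :
    spreadLimit h (s + t) = spreadLimit h (√(s.map (· ^ 2)).sum ::ₘ t) := by
  induction s using Multiset.induction_on generalizing t with
  | empty => simp [hA.spreadLimit_cons_zero]
  | cons x s ih =>
    rw [Multiset.cons_add, ← Multiset.add_cons, ih, hA.spreadLimit_cons_cons]
    have hs := sum_map_nonneg (fun y => sq_nonneg y) s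
    rw [Multiset.map_cons, Multiset.sum_cons, Real.sq_sqrt hs,
      Real.sq_sqrt (add_nonneg (sq_nonneg x) hs)]
    ring

theorem abs_apply_sub_spreadLimit_le (hA : Admissible h B) {n : ℕ} (ε : Fin n → ℝ) :
    |h n ε - spreadLimit h {√(∑ j, ε j ^ 2)}| ≤ 48 * B * ∑ j, |ε j| ^ 3 := by
  have hsum : ∀ f : ℝ → ℝ, ((List.ofFn ε : Multiset ℝ).map f).sum = ∑ j, f (ε j) := fun f => by
    rw [Multiset.map_coe, Multiset.sum_coe, List.map_ofFn, List.sum_ofFn]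
    rfl
  have hL := hA.spreadLimit_add (List.ofFn ε) 0
  have := hA.abs_evalMultiset_sub_spreadLimit_le (List.ofFn ε)
  rw [add_zero, hsum, ← Multiset.singleton_add, add_zero] at hL
  rwa [evalMultiset_ofFn hA.comp_perm, hL, hsum] at this

end Admissible

/-- Berry–Esseen type theorem (Theorem 2.1 of Götze–Naumov–Ulyanov). -/
theorem stmt_19 :
    ∃ c : ℝ, 0 < c ∧
      ∀ (h : (n : ℕ) → (Fin n → ℝ) → ℝ) (B : ℝ), 0 < B →
        (∀ n, ContDiff ℝ 3 (h n)) →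
        -- (1) inserting a zero argument reduces `h (n+1)` to `h n`
        (∀ (n : ℕ) (j : Fin (n + 1)) (ε : Fin n → ℝ),
          h (n + 1) (Fin.insertNth j 0 ε) = h n ε) →
        -- (2) first partial derivatives vanish whenever the coordinate is zero
        (∀ (n : ℕ) (j : Fin n) (ε : Fin n → ℝ), ε j = 0 → pd j (h n) ε = 0) →
        -- (3) symmetry under permutations
        (∀ (n : ℕ) (σ : Equiv.Perm (Fin n)) (ε : Fin n → ℝ), h n (ε ∘ σ) = h n ε) →
        -- (4) uniform bound on the mixed partial derivatives `D^α`
        (∀ (n r : ℕ), r ≤ 3 → ∀ (ι : Fin r → Fin n), Function.Injective ι →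
          ∀ α : Fin r → ℕ, (∀ q, 2 ≤ α q) → (∑ q, (α q - 2)) ≤ 1 →
          ∀ ε : Fin n → ℝ, |pdMulti ι α (h n) ε| ≤ B) →
        ∃ hinf : ℝ → ℝ,
          ∀ (n : ℕ) (ε : Fin n → ℝ),
            |h n ε - hinf (Real.sqrt (∑ j, ε j ^ 2))|
              ≤ c * B * max 1 (Real.sqrt (∑ j, ε j ^ 2) ^ 3) * ∑ j, |ε j| ^ 3 := by
  refine ⟨48, by norm_num, fun h B hB hsmooth hins hvan hsym hbdd =>
    ⟨fun t => spreadLimit h {t}, fun n ε => ?_⟩⟩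
  have hpd : ∀ n k, 2 ≤ k → k ≤ 3 → ∀ x, |(pd 0)^[k] (h (n + 1)) x| ≤ B := fun n k hk₂ hk₃ x => by
    simpa [pdMulti] using hbdd (n + 1) 1 le_add_self ![0] (Function.injective_of_subsingleton _)
      ![k] (by simpa using hk₂)
      (by simp only [Fin.sum_univ_one, Matrix.cons_val_fin_one]; omega) x
  have hA : Admissible h B :=
    { contDiff := hsmooth
      comp_perm := hsym
      cons_zero := fun n ε => by simpa [Fin.insertNth_zero'] using hins n 0 ε
      pd_cons_zero := fun n ε => hvan (n + 1) 0 _ rfl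
      abs_pd_pd_le := fun n => hpd n 2 le_rfl (by norm_num)
      abs_pd_pd_pd_le := fun n => hpd n 3 (by norm_num) le_rfl }
  refine (hA.abs_apply_sub_spreadLimit_le ε).trans <| mul_le_mul_of_nonneg_right
    (le_mul_of_one_le_right (by positivity) (le_max_left _ _)) (sum_nonneg fun j _ => by positivity)
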